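/- Let G be a just infinite group that is not virtually abelian, and let H be a finite-index subgroup of G. If H is not just infinite, then there exists a basal subgroup B of G such that H acts intransitively by conjugation on the set of G-conjugates of B, and the normal core of H in G acts trivially on this set. -/

import Mathlib

def ResiduallyFinite (G : Type*) [Group G] : Prop :=
  sInf {N : Subgroup G | N.Normal ∧ N.FiniteIndex} = ⊥

def JustInfinite (G : Type*) [Group G] : Prop :=
  Infinite G ∧ ResiduallyFinite G ∧
    ∀ N : Subgroup G, N.Normal → N ≠ ⊥ → N.FiniteIndex

def FinRadical (G : Type*) [Group G] : Set G :=
  { x | ∃ N : Subgroup G, N.Normal ∧ (N : Set G).Finite ∧ x ∈ N }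

def VirtuallyAbelian (G : Type*) [Group G] : Prop :=
  ∃ H : Subgroup G, H.FiniteIndex ∧ ∀ a b : H, a * b = b * a

def conjugatesSet (G : Type*) [Group G] (B : Subgroup G) : Set (Subgroup G) :=
  { C | ∃ g : G, B.map (MulAut.conj g).toMonoidHom = C }

def IsBasal (G : Type*) [Group G] (B : Subgroup G) : Prop :=
  B ≠ ⊥ ∧ (conjugatesSet G B).Finite ∧
  (∀ C ∈ conjugatesSet G B, ∀ D ∈ conjugatesSet G B, C ≠ D →
      C ⊓ D = ⊥ ∧ ∀ x ∈ C, ∀ y ∈ D, Commute x y) ∧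
  iSupIndep (fun C : conjugatesSet G B => (C : Subgroup G)) ∧
  (⨆ C ∈ conjugatesSet G B, C) = Subgroup.normalClosure (B : Set G)

/-!
In a just infinite group that is not virtually abelian, every normal subgroup `N` has trivial
centre: `N ⊓ centralizer N` is normal and abelian, so if it were nontrivial it would have finite
index. Since `H` is not just infinite, it has a nontrivial normal subgroup `K` of infinite index.
`K` meets the core `L` of `H` nontrivially: otherwise `K` is a finite subgroup with finitely many
conjugates, and the centraliser of its normal closure `M` has finite index, so the trivial
`M ⊓ centralizer M` would have finite index in the infinite group `G`. A minimal nontrivial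
intersection `B` of conjugates of `K ⊓ L` has pairwise trivially intersecting conjugates; they lie
in `L` and are normalized by `L`, hence commute, and trivial centres make their join direct. If `H`
were transitive on them, the normal closure of `B` would lie in `K`, giving `K` finite index.
-/

open Pointwise MulAction

namespace Subgroup

variable {G : Type*} [Group G]

theorem map_conj_eq_toConjAct_smul (g : G) (B : Subgroup G) :
    B.map (MulAut.conj g).toMonoidHom = ConjAct.toConjAct g • B :=
  rfl

theorem pointwise_smul_sInf {α : Type*} [Group α] [MulDistribMulAction α G] (a : α)
    (T : Set (Subgroup G)) : a • sInf T = sInf (a • T) := by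
  ext x
  simp [mem_pointwise_smul_iff_inv_smul_mem, mem_sInf, ← Set.image_smul]

theorem index_normalizer_eq_ncard_orbit (B : Subgroup G) :
    (normalizer (B : Set G)).index = (orbit (ConjAct G) B).ncard := by
  have hstab : normalizer (B : Set G) =
      (stabilizer (ConjAct G) B).map (ConjAct.ofConjAct (G := G) : ConjAct G →* G) := by
    ext g
    rw [← MulEquiv.toMonoidHom_eq_coe, mem_map_equiv, ← conjAct_pointwise_smul_iff]
    rfl
  rw [hstab, index_map_equiv, index_stabilizer]

theorem index_centralizer_singleton_eq_ncard_orbit (g : G) :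
    (centralizer {g}).index = (orbit (ConjAct G) g).ncard := by
  have hstab : centralizer {g} =
      (stabilizer (ConjAct G) g).map (ConjAct.ofConjAct (G := G) : ConjAct G →* G) := by
    ext k
    rw [← MulEquiv.toMonoidHom_eq_coe, mem_map_equiv]
    simp [mem_centralizer_singleton_iff, ConjAct.toConjAct_smul, eq_mul_inv_iff_mul_eq, eq_comm]
  rw [hstab, index_map_equiv, index_stabilizer]

theorem finite_orbit_of_finiteIndex_normalizer {B : Subgroup G}
    (hB : (normalizer (B : Set G)).FiniteIndex) : (orbit (ConjAct G) B).Finite :=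
  Set.finite_of_ncard_ne_zero (index_normalizer_eq_ncard_orbit B ▸ hB.index_ne_zero)

theorem le_normalizer_smul {L B : Subgroup G} [hL : L.Normal] (hLB : L ≤ normalizer (B : Set G))
    (g : ConjAct G) : L ≤ normalizer ((g • B : Subgroup G) : Set G) := by
  intro l hl
  have hl' := hLB (hL.conj_mem l hl (ConjAct.ofConjAct g⁻¹))
  rw [← conjAct_pointwise_smul_iff] at hl' ⊢
  calc ConjAct.toConjAct l • g • B
      = g • ConjAct.toConjAct (ConjAct.ofConjAct g⁻¹ * l * (ConjAct.ofConjAct g⁻¹)⁻¹) • B := by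
        simp [smul_smul, mul_assoc]
    _ = g • B := by rw [hl']

theorem le_normalizer_sInf {L : Subgroup G} {T : Set (Subgroup G)}
    (hT : ∀ C ∈ T, L ≤ normalizer (C : Set G)) :
    L ≤ normalizer ((sInf T : Subgroup G) : Set G) := fun l hl x => by
  simp only [SetLike.mem_coe, mem_sInf]
  exact forall₂_congr fun C hC => hT C hC hl x

theorem le_normalizer_map_subtype {H : Subgroup G} (N : Subgroup H) [N.Normal] :
    H ≤ normalizer ((N.map H.subtype : Subgroup G) : Set G) := by
  have := le_normalizer_map (H := N) H.subtype
  rwa [normalizer_eq_top, ← MonoidHom.range_eq_map, range_subtype] at this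

theorem commute_of_le_normalizer_of_disjoint {X Y : Subgroup G}
    (hXY : X ≤ normalizer (Y : Set G)) (hYX : Y ≤ normalizer (X : Set G)) (hdisj : Disjoint X Y)
    {x y : G} (hx : x ∈ X) (hy : y ∈ Y) : Commute x y := by
  suffices x * y * x⁻¹ * y⁻¹ = 1 by
    rw [mul_assoc, mul_eq_one_iff_eq_inv] at this
    simpa [Commute, SemiconjBy] using this
  apply hdisj.le_bot
  constructor
  · simpa [mul_assoc] using X.mul_mem hx ((mem_normalizer_iff.1 (hYX hy) _).1 (X.inv_mem hx))
  · exact Y.mul_mem ((mem_normalizer_iff.1 (hXY hx) y).1 hy) (Y.inv_mem hy)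

theorem conjugatesOfSet_subset_biUnion_orbit (B : Subgroup G) :
    Group.conjugatesOfSet (B : Set G) ⊆ ⋃ C ∈ orbit (ConjAct G) B, (C : Set G) := by
  intro x hx
  obtain ⟨b, hb, hbx⟩ := Group.mem_conjugatesOfSet_iff.1 hx
  obtain ⟨c, rfl⟩ := isConj_iff.1 hbx
  refine Set.mem_biUnion (mem_orbit B (ConjAct.toConjAct c)) ?_
  rw [← ConjAct.toConjAct_smul]
  exact smul_mem_pointwise_smul b _ B hb

theorem iSup_orbit_eq_normalClosure (B : Subgroup G) :
    ⨆ C ∈ orbit (ConjAct G) B, C = normalClosure (B : Set G) := by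
  apply le_antisymm
  · refine iSup₂_le fun C ⟨g, hg⟩ => hg ▸ ?_
    rw [← normalClosure_normal.conjAct g]
    exact pointwise_smul_le_pointwise_smul_iff.2 le_normalClosure
  · refine (closure_le _).2 <| (conjugatesOfSet_subset_biUnion_orbit B).trans ?_
    exact Set.iUnion₂_subset fun C hC => SetLike.coe_subset_coe.2 <|
      le_biSup (fun C : Subgroup G => C) hC

theorem normalClosure_le_of_forall_exists_smul {H K B : Subgroup G}
    (hHK : H ≤ normalizer (K : Set G)) (hBK : B ≤ K)
    (htrans : ∀ D ∈ orbit (ConjAct G) B, ∃ h ∈ H, ConjAct.toConjAct h • B = D) :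
    normalClosure (B : Set G) ≤ K := by
  rw [← iSup_orbit_eq_normalClosure]
  refine iSup₂_le fun D hD => ?_
  obtain ⟨h, hh, rfl⟩ := htrans D hD
  rw [← conjAct_pointwise_smul_eq_self (hHK hh)]
  exact pointwise_smul_le_pointwise_smul_iff.2 hBK

theorem finite_conjugatesOfSet {E : Subgroup G} (hE : (E : Set G).Finite)
    (hN : (normalizer (E : Set G)).FiniteIndex) : (Group.conjugatesOfSet (E : Set G)).Finite :=
  ((finite_orbit_of_finiteIndex_normalizer hN).biUnion fun _ ⟨_, hg⟩ => hg ▸ hE.smul_set).subset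
    (conjugatesOfSet_subset_biUnion_orbit E)

theorem finiteIndex_centralizer_normalClosure {s : Set G}
    (hs : (Group.conjugatesOfSet s).Finite) :
    (centralizer (normalClosure s : Set G)).FiniteIndex := by
  rw [normalClosure, centralizer_closure, centralizer_eq_iInf, ← iInf_subtype'']
  have := hs.to_subtype
  refine finiteIndex_iInf fun u => ?_
  have horbit : orbit (ConjAct G) (u : G) ⊆ Group.conjugatesOfSet s := fun x hx =>
    Group.mem_conjugatesOfSet_iff.2 <| by
      obtain ⟨a, ha, hau⟩ := Group.mem_conjugatesOfSet_iff.1 u.2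
      exact ⟨a, ha, hau.trans (ConjAct.mem_orbit_conjAct.1 hx).symm⟩
  rw [finiteIndex_iff, index_centralizer_singleton_eq_ncard_orbit]
  exact ((Set.ncard_pos (hs.subset horbit)).2 ⟨u, mem_orbit_self _⟩).ne'

theorem finite_of_inf_eq_bot {K L : Subgroup G} [L.FiniteIndex] (h : K ⊓ L = ⊥) :
    (K : Set G).Finite := by
  have hfi : (L.subgroupOf K).FiniteIndex := inferInstance
  rw [subgroupOf_eq_bot.2 (disjoint_iff.2 (inf_comm L K ▸ h))] at hfi
  exact Set.finite_coe_iff.1 ((finite_iff_finite_and_finiteIndex ⊥).2 ⟨inferInstance, hfi⟩)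

theorem exists_sInf_orbit_minimal {K : Subgroup G} (hK : K ≠ ⊥)
    (hfin : (orbit (ConjAct G) K).Finite) :
    ∃ T ⊆ orbit (ConjAct G) K, sInf T ≤ K ∧ sInf T ≠ ⊥ ∧
      ∀ g : ConjAct G, sInf T ⊓ g • sInf T ≠ ⊥ → g • sInf T = sInf T := by
  set I : Set (Subgroup G) :=
    {X | X ≠ ⊥ ∧ ∃ T ⊆ orbit (ConjAct G) K, K ∈ T ∧ sInf T = X}
  have hI : I.Finite := (hfin.finite_subsets.image sInf).subset
    fun X ⟨_, T, hT, _, hX⟩ => ⟨T, hT, hX⟩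
  obtain ⟨_, ⟨hB, T, hTK, hKT, rfl⟩, hmin⟩ :=
    hI.exists_minimal ⟨K, hK, {K}, by simp [mem_orbit_self K], rfl, sInf_singleton⟩
  have hsmul : ∀ g : ConjAct G, g • T ⊆ orbit (ConjAct G) K := by
    rintro g _ ⟨C, hC, rfl⟩
    obtain ⟨x, rfl⟩ := hTK hC
    exact ⟨g * x, mul_smul g x K⟩
  -- `sInf T ⊓ g • sInf T` is again an intersection of conjugates of `K` with `K` among them.
  have hle : ∀ g : ConjAct G, sInf T ⊓ g • sInf T ≠ ⊥ → sInf T ≤ g • sInf T := fun g hg =>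
    (hmin ⟨hg, T ∪ g • T, Set.union_subset hTK (hsmul g), Or.inl hKT,
      by rw [sInf_union, pointwise_smul_sInf]⟩ inf_le_left).trans inf_le_right
  refine ⟨T, hTK, sInf_le hKT, hB, fun g hg => le_antisymm ?_ (hle g hg)⟩
  rw [pointwise_smul_subset_iff]
  refine hle g⁻¹ fun h => hg ?_
  rw [← smul_inv_smul g (sInf T ⊓ g • sInf T), smul_inf, inv_smul_smul, inf_comm, h, smul_bot]

theorem inf_eq_bot_of_mem_orbit {B : Subgroup G}
    (hB : ∀ g : ConjAct G, B ⊓ g • B ≠ ⊥ → g • B = B) {C D : Subgroup G}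
    (hC : C ∈ orbit (ConjAct G) B) (hD : D ∈ orbit (ConjAct G) B) (hCD : C ≠ D) : C ⊓ D = ⊥ := by
  obtain ⟨a, rfl⟩ := hC
  obtain ⟨b, rfl⟩ := hD
  dsimp only at hCD ⊢
  have hab : a • B ⊓ b • B = a • (B ⊓ (a⁻¹ * b) • B) := by
    rw [smul_inf, smul_smul, mul_inv_cancel_left]
  by_contra h
  refine hCD ?_
  have hfix := hB (a⁻¹ * b) fun h' => h (by rw [hab, h', smul_bot])
  rw [← smul_inv_smul a (b • B), smul_smul a⁻¹, hfix]

end Subgroup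

open Subgroup

section

variable {G : Type*} [Group G]

theorem conjugatesSet_eq_orbit (B : Subgroup G) :
    conjugatesSet G B = orbit (ConjAct G) B := by
  ext C
  simp only [conjugatesSet, map_conj_eq_toConjAct_smul, Set.mem_ofPred_eq, mem_orbit_iff]
  exact ⟨fun ⟨g, h⟩ => ⟨_, h⟩, fun ⟨x, h⟩ => ⟨ConjAct.ofConjAct x, h⟩⟩

theorem inf_centralizer_eq_bot (hfi : ∀ N : Subgroup G, N.Normal → N ≠ ⊥ → N.FiniteIndex)
    (hnva : ¬ VirtuallyAbelian G) (N : Subgroup G) [N.Normal] :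
    N ⊓ centralizer (N : Set G) = ⊥ := by
  by_contra hZ
  exact hnva ⟨_, hfi _ inferInstance hZ, fun a b => Subtype.ext (a.2.2 b b.2.1).symm⟩

theorem eq_bot_of_finite_of_finiteIndex_normalizer [Infinite G]
    (hfi : ∀ N : Subgroup G, N.Normal → N ≠ ⊥ → N.FiniteIndex) (hnva : ¬ VirtuallyAbelian G)
    {E : Subgroup G} (hE : (E : Set G).Finite) (hN : (normalizer (E : Set G)).FiniteIndex) :
    E = ⊥ := by
  by_contra hne
  set M := normalClosure (E : Set G)
  have := hfi M normalClosure_normal (ne_bot_of_le_ne_bot hne le_normalClosure)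
  have := finiteIndex_centralizer_normalClosure (finite_conjugatesOfSet hE hN)
  have hbot : (M ⊓ centralizer (M : Set G)).FiniteIndex := inferInstance
  rw [inf_centralizer_eq_bot hfi hnva] at hbot
  have : Finite G := (finite_iff_finite_and_finiteIndex ⊥).2 ⟨inferInstance, hbot⟩
  exact not_finite G

theorem iSupIndep_of_pairwise_commute (hfi : ∀ N : Subgroup G, N.Normal → N ≠ ⊥ → N.FiniteIndex)
    (hnva : ¬ VirtuallyAbelian G) {S : Set (Subgroup G)} (hS : (⨆ C ∈ S, C).Normal)
    (hcomm : ∀ C ∈ S, ∀ D ∈ S, C ≠ D → ∀ x ∈ C, ∀ y ∈ D, Commute x y) :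
    iSupIndep (fun C : S => (C : Subgroup G)) := by
  have hcent : ∀ C D : S, D ≠ C → (D : Subgroup G) ≤ centralizer (C : Set G) :=
    fun C D hDC y hy x hx => (hcomm C C.2 D D.2 (fun h => hDC (Subtype.ext h.symm)) x hx y hy).eq
  intro C
  set P : Subgroup G := ⨆ (D : S) (_ : D ≠ C), (D : Subgroup G)
  change Disjoint (C : Subgroup G) P
  have hCP : ((C ⊓ P : Subgroup G) : Set G) ⊆ C := fun _ hx => hx.1
  have hPC : ((C ⊓ P : Subgroup G) : Set G) ⊆ P := fun _ hx => hx.2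
  rw [disjoint_iff, eq_bot_iff, ← inf_centralizer_eq_bot hfi hnva (⨆ C ∈ S, C)]
  refine le_inf (inf_le_left.trans (le_biSup (fun C : Subgroup G => C) C.2)) ?_
  rw [le_centralizer_iff]
  refine iSup₂_le fun D hD => ?_
  by_cases hDC : (⟨D, hD⟩ : S) = C
  · subst hDC
    refine le_trans ?_ (centralizer_le hPC)
    rw [le_centralizer_iff]
    exact iSup₂_le fun D' hD' => hcent _ D' hD'
  · exact (hcent C _ hDC).trans (centralizer_le hCP)

theorem isBasal_of_forall_inf_smul (hfi : ∀ N : Subgroup G, N.Normal → N ≠ ⊥ → N.FiniteIndex)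
    (hnva : ¬ VirtuallyAbelian G) {L B : Subgroup G} [L.Normal] [L.FiniteIndex] (hB : B ≠ ⊥)
    (hBL : B ≤ L) (hLB : L ≤ normalizer (B : Set G))
    (hdisj : ∀ g : ConjAct G, B ⊓ g • B ≠ ⊥ → g • B = B) : IsBasal G B := by
  have hle : ∀ C ∈ orbit (ConjAct G) B, C ≤ L ∧ L ≤ normalizer (C : Set G) := by
    rintro _ ⟨g, rfl⟩
    refine ⟨?_, le_normalizer_smul hLB g⟩
    rw [← ‹L.Normal›.conjAct g]
    exact pointwise_smul_le_pointwise_smul_iff.2 hBL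
  have hcomm : ∀ C ∈ orbit (ConjAct G) B, ∀ D ∈ orbit (ConjAct G) B, C ≠ D →
      ∀ x ∈ C, ∀ y ∈ D, Commute x y := fun C hC D hD hCD x hx y hy =>
    commute_of_le_normalizer_of_disjoint ((hle C hC).1.trans (hle D hD).2)
      ((hle D hD).1.trans (hle C hC).2) (disjoint_iff.2 (inf_eq_bot_of_mem_orbit hdisj hC hD hCD))
      hx hy
  have hsup := iSup_orbit_eq_normalClosure B
  rw [IsBasal, conjugatesSet_eq_orbit]
  exact ⟨hB, finite_orbit_of_finiteIndex_normalizer (finiteIndex_of_le hLB),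
    fun C hC D hD hCD => ⟨inf_eq_bot_of_mem_orbit hdisj hC hD hCD, hcomm C hC D hD hCD⟩,
    iSupIndep_of_pairwise_commute hfi hnva (hsup ▸ normalClosure_normal) hcomm, hsup⟩

theorem exists_isBasal_le (hfi : ∀ N : Subgroup G, N.Normal → N ≠ ⊥ → N.FiniteIndex)
    (hnva : ¬ VirtuallyAbelian G) {L K : Subgroup G} [L.Normal] [L.FiniteIndex] (hK : K ≠ ⊥)
    (hKL : K ≤ L) (hLK : L ≤ normalizer (K : Set G)) :
    ∃ B ≤ K, IsBasal G B ∧ L ≤ normalizer (B : Set G) := by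
  obtain ⟨T, hTK, hBK, hB, hdisj⟩ :=
    exists_sInf_orbit_minimal hK (finite_orbit_of_finiteIndex_normalizer (finiteIndex_of_le hLK))
  have hLB : L ≤ normalizer ((sInf T : Subgroup G) : Set G) := le_normalizer_sInf fun C hC => by
    obtain ⟨g, rfl⟩ := hTK hC
    exact le_normalizer_smul hLK g
  exact ⟨sInf T, hBK, isBasal_of_forall_inf_smul hfi hnva hB (hBK.trans hKL) hLB hdisj, hLB⟩

end

theorem ResiduallyFinite.subgroup {G : Type*} [Group G] (h : ResiduallyFinite G)
    (H : Subgroup G) : ResiduallyFinite H := by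
  rw [ResiduallyFinite, eq_bot_iff]
  intro x hx
  have hxG : (x : G) ∈ sInf {N : Subgroup G | N.Normal ∧ N.FiniteIndex} :=
    Subgroup.mem_sInf.2 fun N ⟨hN, hfi⟩ =>
      Subgroup.mem_sInf.1 hx (N.subgroupOf H) ⟨hN.subgroupOf H, inferInstance⟩
  rw [h, Subgroup.mem_bot] at hxG
  exact Subgroup.mem_bot.2 (Subtype.ext hxG)

/-- If a finite index subgroup H of a just infinite, non virtually abelian
group G is not just infinite, then there is a basal subgroup B of G on whose
conjugates H acts intransitively while the normal core of H acts trivially. -/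
theorem exists_basal_of_not_justInfinite {G : Type*} [Group G]
    (hji : JustInfinite G) (hnva : ¬ VirtuallyAbelian G)
    (H : Subgroup G) (hH : H.FiniteIndex) (hnji : ¬ JustInfinite H) :
    ∃ B : Subgroup G, IsBasal G B ∧
      ¬ (∀ C ∈ conjugatesSet G B, ∀ D ∈ conjugatesSet G B,
          ∃ h ∈ H, C.map (MulAut.conj h).toMonoidHom = D) ∧
      (∀ g ∈ H.normalCore, ∀ C ∈ conjugatesSet G B,
          C.map (MulAut.conj g).toMonoidHom = C) := by
  obtain ⟨hinf, hrf, hfi⟩ := hji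
  have hHinf : Infinite H := by
    rw [← not_finite_iff_infinite]
    intro hfin
    have : Finite G := (finite_iff_finite_and_finiteIndex H).2 ⟨hfin, hH⟩
    exact not_finite G
  obtain ⟨N, hN, hNbot, hNfi⟩ : ∃ N : Subgroup H, N.Normal ∧ N ≠ ⊥ ∧ ¬ N.FiniteIndex := by
    simpa [JustInfinite, hHinf, hrf.subgroup H] using hnji
  set K := N.map H.subtype
  have hHK := le_normalizer_map_subtype N
  have hKL : K ⊓ H.normalCore ≠ ⊥ := fun h =>
    hNbot <| (map_eq_bot_iff_of_injective N H.subtype_injective).1 <|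
      eq_bot_of_finite_of_finiteIndex_normalizer hfi hnva (finite_of_inf_eq_bot h)
        (finiteIndex_of_le hHK)
  have hLK : H.normalCore ≤ normalizer ((K ⊓ H.normalCore : Subgroup G) : Set G) :=
    (le_inf (H.normalCore_le.trans hHK) le_normalizer_of_normal).trans
      inf_normalizer_le_normalizer_inf
  obtain ⟨B, hBK, hB, hLB⟩ := exists_isBasal_le hfi hnva hKL inf_le_right hLK
  simp only [conjugatesSet_eq_orbit, map_conj_eq_toConjAct_smul]
  refine ⟨B, hB, fun htrans => hNfi ?_, fun g hg C ⟨x, hC⟩ => hC ▸ ?_⟩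
  · have := hfi _ normalClosure_normal (ne_bot_of_le_ne_bot hB.1 le_normalClosure)
    have hKfi : K.FiniteIndex := finiteIndex_of_le <| normalClosure_le_of_forall_exists_smul hHK
      (hBK.trans inf_le_left) (htrans B (MulAction.mem_orbit_self B))
    rw [← comap_map_eq_self_of_injective H.subtype_injective N]
    exact instFiniteIndex_subgroupOf K H
  · exact conjAct_pointwise_smul_eq_self (le_normalizer_smul hLB x hg)
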